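/- arXiv:2305.11054 — 2 statements merged into one kernel-verified Lean document; each statement's English description precedes it below -/
import Mathlib

section
/- Let α, α' : Z^d → [0,∞) be two symmetric coefficient systems satisfying ∑_k α_k‖k‖ < ∞ and ∑_k α'_k‖k‖ < ∞. For each rational direction ν ∈ S^{d-1}, let I(ν) = {k ∈ Z^d \ {0} : k/‖k‖ = ν}. Then the functions φ(z) = 4∑_k α_k|⟨z,k⟩| and φ'(z) = 4∑_k α'_k|⟨z,k⟩| coincide on R^d if and only if ∑_{k ∈ I(ν)} α_k‖k‖ = ∑_{k ∈ I(ν)} α'_k‖k‖ for every rational direction ν. -/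
/-!
Write `φ z = ∑ α_k |⟪z, k⟫|`. As `t → 0⁺`, the second difference
`t⁻¹ (φ (z₀ + tν) + φ (z₀ - tν) - 2 φ z₀)` tends to `2 ∑_{⟪z₀, k⟫ = 0} α_k |⟪ν, k⟫|`: only the
terms whose kink passes through `z₀` survive. By Baire's theorem some `z₀ ⊥ ν` is orthogonal to
no lattice vector outside `ℝν`; for a unit vector `ν` the limit is then `2 (m ν + m (-ν))` with
`m ν = ∑_{k ∈ I(ν)} α_k ‖k‖`, and the symmetry of `α` gives `m (-ν) = m ν`. Conversely, grouping
the terms of `φ` by direction gives `φ z = ∑_ν m ν |⟪z, ν⟫|`.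
-/

open scoped RealInnerProductSpace
open Filter Topology

theorem abs_add_add_abs_sub_of_abs_le {a x : ℝ} (h : |x| ≤ |a|) : |a + x| + |a - x| = 2 * |a| := by
  rcases abs_le.1 h with ⟨h₁, h₂⟩
  rcases le_or_gt 0 a with ha | ha
  · rw [abs_of_nonneg ha] at h₁ h₂
    rw [abs_of_nonneg (by linarith), abs_of_nonneg (by linarith), abs_of_nonneg ha]; ring
  · rw [abs_of_neg ha] at h₁ h₂
    rw [abs_of_nonpos (by linarith), abs_of_nonpos (by linarith), abs_of_neg ha]; ring

theorem abs_inv_mul_secondDiff_abs_le {t : ℝ} (ht : 0 < t) (a b : ℝ) :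
    |t⁻¹ * (|a + t * b| + |a - t * b| - 2 * |a|)| ≤ 2 * |b| := by
  have hlow : 2 * |a| ≤ |a + t * b| + |a - t * b| := by
    simpa [← two_mul, abs_mul] using abs_add_le (a + t * b) (a - t * b)
  have hup : |a + t * b| + |a - t * b| ≤ 2 * |a| + t * (2 * |b|) := by
    have := abs_add_le a (t * b)
    have := abs_sub a (t * b)
    rw [abs_mul, abs_of_pos ht] at *
    linarith
  rw [abs_of_nonneg (mul_nonneg (inv_nonneg.2 ht.le) (by linarith))]
  calc t⁻¹ * (|a + t * b| + |a - t * b| - 2 * |a|) ≤ t⁻¹ * (t * (2 * |b|)) := by gcongr; linarith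
    _ = 2 * |b| := by field_simp

theorem tendsto_inv_mul_secondDiff_abs (a b : ℝ) :
    Tendsto (fun t : ℝ => t⁻¹ * (|a + t * b| + |a - t * b| - 2 * |a|)) (𝓝[>] 0)
      (𝓝 (if a = 0 then 2 * |b| else 0)) := by
  split_ifs with ha
  · refine tendsto_const_nhds.congr' ?_
    filter_upwards [self_mem_nhdsWithin] with t (ht : 0 < t)
    rw [ha, zero_add, zero_sub, abs_neg, abs_zero, abs_mul, abs_of_pos ht]
    field_simp
    ring
  · have hsmall : ∀ᶠ t in 𝓝[>] (0 : ℝ), |t * b| < |a| := by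
      refine nhdsWithin_le_nhds (Tendsto.eventually_lt_const (abs_pos.2 ha) ?_)
      simpa using ((continuous_mul_const b).abs.tendsto 0)
    refine tendsto_const_nhds.congr' ?_
    filter_upwards [hsmall] with t ht
    rw [abs_add_add_abs_sub_of_abs_le ht.le, sub_self, mul_zero]

theorem exists_forall_apply_ne_zero {ι E : Type*} [Countable ι] [AddCommGroup E] [Module ℝ E]
    [TopologicalSpace E] [ContinuousAdd E] [ContinuousSMul ℝ E] [BaireSpace E]
    (ℓ : ι → E →L[ℝ] ℝ) (hℓ : ∀ i, ℓ i ≠ 0) : ∃ z, ∀ i, ℓ i z ≠ 0 := by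
  have hdense (i : ι) : Dense ((LinearMap.ker (ℓ i : E →ₗ[ℝ] ℝ) : Set E)ᶜ) := by
    refine interior_eq_empty_iff_dense_compl.1 (Set.not_nonempty_iff_eq_empty.1 fun h => hℓ i ?_)
    exact ContinuousLinearMap.coe_injective (LinearMap.ker_eq_top.1
      ((LinearMap.ker (ℓ i : E →ₗ[ℝ] ℝ)).eq_top_of_nonempty_interior' h))
  obtain ⟨z, hz⟩ := (dense_iInter_of_isOpen
    (fun i => (ℓ i).isClosed_ker.isOpen_compl) hdense).nonempty
  exact ⟨z, fun i => Set.mem_iInter.1 hz i⟩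

variable {E : Type*} [NormedAddCommGroup E] [InnerProductSpace ℝ E]

theorem exists_forall_inner_eq_zero_iff_mem {ι : Type*} [Countable ι] [CompleteSpace E]
    (K : Submodule ℝ E) [K.HasOrthogonalProjection] (w : ι → E) :
    ∃ z₀ : E, ∀ i, ⟪z₀, w i⟫ = 0 ↔ w i ∈ K := by
  have hP (x : E) : Kᗮ.starProjection x = 0 ↔ x ∈ K := by
    rw [Submodule.starProjection_apply_eq_zero_iff, Submodule.orthogonal_orthogonal]
  obtain ⟨z, hz⟩ := exists_forall_apply_ne_zero
    (fun i : {i // w i ∉ K} => innerSL ℝ (Kᗮ.starProjection (w i))) fun i h => i.2 <| by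
      have : ⟪Kᗮ.starProjection (w i), Kᗮ.starProjection (w i)⟫ = 0 :=
        congr($h (Kᗮ.starProjection (w i)))
      rwa [inner_self_eq_zero, hP] at this
  refine ⟨Kᗮ.starProjection z, fun i => ?_⟩
  rw [Submodule.inner_starProjection_left_eq_right, real_inner_comm]
  by_cases hi : w i ∈ K
  · simp only [hi, (hP _).2 hi, inner_zero_left]
  · exact iff_of_false (hz ⟨i, hi⟩) hi

theorem norm_mul_abs_inner_inv_norm_smul (z x : E) : ‖x‖ * |⟪z, ‖x‖⁻¹ • x⟫| = |⟪z, x⟫| := by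
  rcases eq_or_ne x 0 with rfl | hx
  · simp
  rw [real_inner_smul_right, abs_mul, abs_inv, abs_norm,
    mul_inv_cancel_left₀ (norm_ne_zero_iff.2 hx)]

theorem mem_span_singleton_iff_of_norm_eq_one {ν x : E} (hν : ‖ν‖ = 1) (hx : x ≠ 0) :
    x ∈ Submodule.span ℝ {ν} ↔ ‖x‖⁻¹ • x = ν ∨ ‖x‖⁻¹ • x = -ν := by
  constructor
  · rintro hmem
    obtain ⟨c, rfl⟩ := Submodule.mem_span_singleton.1 hmem
    have hc : c ≠ 0 := by rintro rfl; simp at hx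
    rw [norm_smul, hν, mul_one, smul_smul, Real.norm_eq_abs]
    rcases hc.lt_or_gt with hc | hc
    · right; rw [abs_of_neg hc, inv_neg, neg_mul, inv_mul_cancel₀ hc.ne, neg_one_smul]
    · left; rw [abs_of_pos hc, inv_mul_cancel₀ hc.ne', one_smul]
  · intro h
    rw [← smul_inv_smul₀ (norm_ne_zero_iff.2 hx) x]
    rcases h with h | h <;> rw [h]
    · exact Submodule.smul_mem _ _ (Submodule.mem_span_singleton_self ν)
    · exact Submodule.smul_mem _ _ (Submodule.neg_mem _ (Submodule.mem_span_singleton_self ν))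

open scoped Classical in
theorem ite_mem_span_singleton_abs_inner {ν : E} (hν : ‖ν‖ = 1) (x : E) :
    (if x ∈ Submodule.span ℝ {ν} then |⟪ν, x⟫| else 0)
      = (if ‖x‖⁻¹ • x = ν then ‖x‖ else 0) + (if ‖x‖⁻¹ • x = -ν then ‖x‖ else 0) := by
  rcases eq_or_ne x 0 with rfl | hx
  · simp
  have hx' := (norm_mul_abs_inner_inv_norm_smul ν x).symm
  have hνν : ν ≠ -ν := fun h => by
    have := congrArg (⟪ν, ·⟫) h
    norm_num [real_inner_self_eq_norm_sq, hν] at this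
  rw [mem_span_singleton_iff_of_norm_eq_one hν hx]
  by_cases h : ‖x‖⁻¹ • x = ν
  · simp [h, hνν, hx', hν]
  by_cases h' : ‖x‖⁻¹ • x = -ν
  · simp [h', hνν.symm, hx', hν]
  · simp [h, h']

section

variable {ι : Type*} {α : ι → ℝ} {f : ι → E}

noncomputable def absInnerSum (α : ι → ℝ) (f : ι → E) (z : E) : ℝ := ∑' k, α k * |⟪z, f k⟫|

/-- The paper's `∑_{k ∈ I(ν)} α_k ‖k‖` when `‖ν‖ = 1`. -/
noncomputable def dirMass (α : ι → ℝ) (f : ι → E) (ν : E) : ℝ :=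
  ∑' k : {k // ‖f k‖⁻¹ • f k = ν}, α k * ‖f k‖

theorem summable_mul_abs_inner (hsum : Summable fun k => α k * ‖f k‖) (z : E) :
    Summable fun k => α k * |⟪z, f k⟫| :=
  (hsum.abs.mul_right ‖z‖).of_norm_bounded fun k => by
    rw [Real.norm_eq_abs, abs_mul, abs_abs, abs_mul, abs_norm, mul_assoc]
    gcongr
    simpa [mul_comm] using abs_real_inner_le_norm z (f k)

theorem tendsto_inv_mul_secondDiff_absInnerSum (hsum : Summable fun k => α k * ‖f k‖)
    (z₀ v : E) :
    Tendsto (fun t : ℝ => t⁻¹ * (absInnerSum α f (z₀ + t • v) + absInnerSum α f (z₀ - t • v)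
        - 2 * absInnerSum α f z₀)) (𝓝[>] 0)
      (𝓝 (∑' k, α k * if ⟪z₀, f k⟫ = 0 then 2 * |⟪v, f k⟫| else 0)) := by
  have hterm (t : ℝ) : t⁻¹ * (absInnerSum α f (z₀ + t • v) + absInnerSum α f (z₀ - t • v)
      - 2 * absInnerSum α f z₀) = ∑' k, α k * (t⁻¹ * (|⟪z₀, f k⟫ + t * ⟪v, f k⟫|
        + |⟪z₀, f k⟫ - t * ⟪v, f k⟫| - 2 * |⟪z₀, f k⟫|)) := by
    have := (((summable_mul_abs_inner hsum (z₀ + t • v)).hasSum.add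
      (summable_mul_abs_inner hsum (z₀ - t • v)).hasSum).sub
      ((summable_mul_abs_inner hsum z₀).hasSum.mul_left 2)).mul_left t⁻¹
    rw [absInnerSum, absInnerSum, absInnerSum, ← this.tsum_eq]
    congr 1 with k
    simp only [inner_add_left, inner_sub_left, real_inner_smul_left]
    ring
  simp only [hterm]
  refine tendsto_tsum_of_dominated_convergence (bound := fun k => 2 * ‖v‖ * |α k * ‖f k‖|)
    (hsum.abs.mul_left _) (fun k => (tendsto_inv_mul_secondDiff_abs _ _).const_mul (α k)) ?_
  filter_upwards [self_mem_nhdsWithin] with t (ht : 0 < t) k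
  rw [Real.norm_eq_abs, abs_mul, abs_mul (α k) ‖f k‖, abs_norm]
  calc |α k| * |t⁻¹ * _| ≤ |α k| * (2 * |⟪v, f k⟫|) := by
        gcongr; exact abs_inv_mul_secondDiff_abs_le ht _ _
    _ ≤ |α k| * (2 * (‖v‖ * ‖f k‖)) := by gcongr; exact abs_real_inner_le_norm v (f k)
    _ = 2 * ‖v‖ * (|α k| * ‖f k‖) := by ring

open scoped Classical in
theorem dirMass_eq_tsum_ite (ν : E) :
    dirMass α f ν = ∑' k, if ‖f k‖⁻¹ • f k = ν then α k * ‖f k‖ else 0 :=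
  tsum_subtype {k | ‖f k‖⁻¹ • f k = ν} fun k => α k * ‖f k‖

open scoped Classical in
theorem summable_ite_inv_norm_smul_eq (hsum : Summable fun k => α k * ‖f k‖) (ν : E) :
    Summable fun k => if ‖f k‖⁻¹ • f k = ν then α k * ‖f k‖ else 0 :=
  hsum.indicator {k | ‖f k‖⁻¹ • f k = ν}

theorem tsum_mul_ite_inner_eq_zero_eq_two_mul_dirMass {ν z₀ : E} (hν : ‖ν‖ = 1)
    (hz₀ : ∀ k, ⟪z₀, f k⟫ = 0 ↔ f k ∈ Submodule.span ℝ {ν})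
    (hsum : Summable fun k => α k * ‖f k‖) :
    ∑' k, α k * (if ⟪z₀, f k⟫ = 0 then 2 * |⟪ν, f k⟫| else 0)
      = 2 * (dirMass α f ν + dirMass α f (-ν)) := by
  classical
  rw [dirMass_eq_tsum_ite, dirMass_eq_tsum_ite,
    ← (summable_ite_inv_norm_smul_eq hsum ν).tsum_add (summable_ite_inv_norm_smul_eq hsum (-ν)), ← tsum_mul_left]
  refine tsum_congr fun k => ?_
  have := ite_mem_span_singleton_abs_inner hν (f k)
  rw [← hz₀] at this
  split_ifs at this ⊢ <;> linear_combination (2 * α k) * this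

theorem dirMass_neg (σ : ι ≃ ι) (hf : ∀ k, f (σ k) = -f k) (hα : ∀ k, α (σ k) = α k) (ν : E) :
    dirMass α f (-ν) = dirMass α f ν := by
  have hdir (k : ι) : ‖f k‖⁻¹ • f k = ν ↔ ‖f (σ k)‖⁻¹ • f (σ k) = -ν := by
    rw [hf, norm_neg, smul_neg, neg_inj]
  rw [dirMass, dirMass, ← (σ.subtypeEquiv hdir).tsum_eq]
  exact tsum_congr fun k => by simp only [Equiv.subtypeEquiv_apply, hα, hf, norm_neg]

theorem absInnerSum_eq_tsum_dirMass (hsum : Summable fun k => α k * ‖f k‖) (z : E) :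
    absInnerSum α f z = ∑' ν, dirMass α f ν * |⟪z, ν⟫| := by
  rw [absInnerSum, ← ((summable_mul_abs_inner hsum z).hasSum.tsum_fiberwise
    fun k => ‖f k‖⁻¹ • f k).tsum_eq]
  refine tsum_congr fun ν => ?_
  rw [dirMass, ← tsum_mul_right]
  refine tsum_congr fun k => ?_
  have hk : ‖f k‖⁻¹ • f k = ν := k.2
  rw [mul_assoc, ← norm_mul_abs_inner_inv_norm_smul z, hk]

theorem dirMass_add_dirMass_neg_eq_of_absInnerSum_eq [CompleteSpace E] [Countable ι]
    {α' : ι → ℝ} (hsum : Summable fun k => α k * ‖f k‖) (hsum' : Summable fun k => α' k * ‖f k‖)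
    (h : ∀ z, absInnerSum α f z = absInnerSum α' f z) {ν : E} (hν : ‖ν‖ = 1) :
    dirMass α f ν + dirMass α f (-ν) = dirMass α' f ν + dirMass α' f (-ν) := by
  obtain ⟨z₀, hz₀⟩ := exists_forall_inner_eq_zero_iff_mem (Submodule.span ℝ {ν}) f
  have hlim := tendsto_inv_mul_secondDiff_absInnerSum hsum z₀ ν
  simp only [h] at hlim
  have := tendsto_nhds_unique hlim (tendsto_inv_mul_secondDiff_absInnerSum hsum' z₀ ν)
  rw [tsum_mul_ite_inner_eq_zero_eq_two_mul_dirMass hν hz₀ hsum, tsum_mul_ite_inner_eq_zero_eq_two_mul_dirMass hν hz₀ hsum'] at this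
  linarith

theorem absInnerSum_eq_iff_dirMass_eq [CompleteSpace E] [Countable ι] {α' : ι → ℝ}
    (σ : ι ≃ ι) (hf : ∀ k, f (σ k) = -f k) (hα : ∀ k, α (σ k) = α k) (hα' : ∀ k, α' (σ k) = α' k)
    (hsum : Summable fun k => α k * ‖f k‖) (hsum' : Summable fun k => α' k * ‖f k‖) :
    (∀ z, absInnerSum α f z = absInnerSum α' f z) ↔
      ∀ k, f k ≠ 0 → dirMass α f (‖f k‖⁻¹ • f k) = dirMass α' f (‖f k‖⁻¹ • f k) := by
  refine ⟨fun h k hk => ?_, fun h z => ?_⟩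
  · have hunit : ‖‖f k‖⁻¹ • f k‖ = 1 := by
      rw [norm_smul, norm_inv, norm_norm, inv_mul_cancel₀ (norm_ne_zero_iff.2 hk)]
    have := dirMass_add_dirMass_neg_eq_of_absInnerSum_eq hsum hsum' h hunit
    rw [dirMass_neg σ hf hα, dirMass_neg σ hf hα'] at this
    linarith
  rw [absInnerSum_eq_tsum_dirMass hsum, absInnerSum_eq_tsum_dirMass hsum']
  refine tsum_congr fun ν => ?_
  rcases isEmpty_or_nonempty {k // ‖f k‖⁻¹ • f k = ν} with hν | ⟨k, rfl⟩
  · simp only [dirMass, tsum_empty]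
  rcases eq_or_ne (f k) 0 with hk | hk
  · simp [hk]
  · rw [h k hk]

end

theorem stmt_11_general (d : ℕ) (α α' : (Fin d → ℤ) → ℝ)
    (hsym : ∀ k, α (-k) = α k) (hsym' : ∀ k, α' (-k) = α' k)
    (latCoe : (Fin d → ℤ) → EuclideanSpace ℝ (Fin d))
    (hlat : ∀ k n, latCoe k n = (k n : ℝ))
    (hdec : Summable fun k => α k * ‖latCoe k‖)
    (hdec' : Summable fun k => α' k * ‖latCoe k‖) :
    (∀ z : EuclideanSpace ℝ (Fin d),
        4 * ∑' k, α k * |⟪z, latCoe k⟫| = 4 * ∑' k, α' k * |⟪z, latCoe k⟫|) ↔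
    (∀ k₀ : Fin d → ℤ, k₀ ≠ 0 →
      ∑' k : {k : Fin d → ℤ // k ≠ 0 ∧
          ‖latCoe k‖⁻¹ • latCoe k = ‖latCoe k₀‖⁻¹ • latCoe k₀},
        α k.1 * ‖latCoe k.1‖
      = ∑' k : {k : Fin d → ℤ // k ≠ 0 ∧
          ‖latCoe k‖⁻¹ • latCoe k = ‖latCoe k₀‖⁻¹ • latCoe k₀},
        α' k.1 * ‖latCoe k.1‖) := by
  have hzero (k : Fin d → ℤ) : latCoe k = 0 ↔ k = 0 := by
    rw [← WithLp.ofLp_eq_zero, funext_iff, funext_iff]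
    simp [hlat]
  have hneg (k : Fin d → ℤ) : latCoe (-k) = -latCoe k := by
    ext n
    simp [hlat]
  have hfiber (k₀ : Fin d → ℤ) (hk₀ : k₀ ≠ 0) (β : (Fin d → ℤ) → ℝ) :
      ∑' k : {k : Fin d → ℤ // k ≠ 0 ∧ ‖latCoe k‖⁻¹ • latCoe k = ‖latCoe k₀‖⁻¹ • latCoe k₀},
        β k.1 * ‖latCoe k.1‖ = dirMass β latCoe (‖latCoe k₀‖⁻¹ • latCoe k₀) := by
    refine (Equiv.subtypeEquivRight fun k => ⟨And.right, fun h => ⟨fun hk => ?_, h⟩⟩).tsum_eq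
      fun k => β k.1 * ‖latCoe k.1‖
    rw [hk, (hzero 0).2 rfl, smul_zero, eq_comm, smul_eq_zero] at h
    simp [hzero, hk₀] at h
  simp only [mul_right_inj' (four_ne_zero' ℝ)]
  refine (absInnerSum_eq_iff_dirMass_eq (Equiv.neg _) hneg hsym hsym' hdec hdec').trans
    (forall_congr' fun k₀ => ?_)
  rw [Ne, hzero]
  exact imp_congr_right fun hk₀ => by rw [hfiber k₀ hk₀, hfiber k₀ hk₀]

/-- Two decaying symmetric Ising systems generate the same surface tension
`φ(z) = 4 ∑_k α_k |⟨z,k⟩|` if and only if, for every rational direction `ν`,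
the grouped totals `∑_{k ∈ I(ν)} α_k ‖k‖` coincide. -/
theorem stmt_11 (d : ℕ) (α α' : (Fin d → ℤ) → ℝ)
    (hα : ∀ k, 0 ≤ α k) (hα' : ∀ k, 0 ≤ α' k)
    (hsym : ∀ k, α (-k) = α k) (hsym' : ∀ k, α' (-k) = α' k)
    (latCoe : (Fin d → ℤ) → EuclideanSpace ℝ (Fin d))
    (hlat : ∀ k n, latCoe k n = (k n : ℝ))
    (hdec : Summable fun k => α k * ‖latCoe k‖)
    (hdec' : Summable fun k => α' k * ‖latCoe k‖) :
    (∀ z : EuclideanSpace ℝ (Fin d),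
        4 * ∑' k, α k * |⟪z, latCoe k⟫| = 4 * ∑' k, α' k * |⟪z, latCoe k⟫|) ↔
    (∀ k₀ : Fin d → ℤ, k₀ ≠ 0 →
      ∑' k : {k : Fin d → ℤ // k ≠ 0 ∧
          ‖latCoe k‖⁻¹ • latCoe k = ‖latCoe k₀‖⁻¹ • latCoe k₀},
        α k.1 * ‖latCoe k.1‖
      = ∑' k : {k : Fin d → ℤ // k ≠ 0 ∧
          ‖latCoe k‖⁻¹ • latCoe k = ‖latCoe k₀‖⁻¹ • latCoe k₀},
        α' k.1 * ‖latCoe k.1‖) :=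
  stmt_11_general d α α' hsym hsym' latCoe hlat hdec hdec'
end

section
/- Let α : Z^d → [0,∞) be symmetric with finite support, and suppose the set {k ∈ Z^d : α_k > 0} generates Z^d as a group. Then there exist constants M > 0 such that for every u : Z^d → {-1,1}, #{(i,j) ∈ Z^d × Z^d : ‖i-j‖ = 1, u_i ≠ u_j} ≤ M ∑_{i,j ∈ Z^d} α_{i-j}(u_i - u_j)^2, where the right-hand side is allowed to be +∞. -/
/-!
Write `N_u(e)` for the number of sites `j` with `u (e + j) ≠ u j`. Every jump across `a + b`
is a jump across `a` or across `b` (after a translation), so `N_u` is subadditive, and it is even.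
Hence the directions `e` with `N_u(e) ≤ C_e · E(u)` for a constant `C_e` independent of `u` form a
subgroup, where `E(u) = ∑ₖ αₖ N_u(k)`. It contains every `k` with `αₖ > 0`, so by the spanning
assumption it contains the `2d` unit vectors. For `±1` spins the Ising energy equals `4 E(u)`,
and the number of sign changes along lattice bonds is the sum of `N_u` over the unit vectors.
-/

open scoped Classical ENNReal NNReal

section Jumps

variable {G β : Type*} [AddGroup G]

noncomputable def jumpCount (u : G → β) (e : G) : ℝ≥0∞ :=
  ∑' j, if u (e + j) ≠ u j then 1 else 0

theorem jumpCount_zero (u : G → β) : jumpCount u 0 = 0 := by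
  simp [jumpCount]

theorem jumpCount_add_le (u : G → β) (a b : G) :
    jumpCount u (a + b) ≤ jumpCount u a + jumpCount u b := by
  have hshift : jumpCount u a = ∑' j, if u (a + (b + j)) ≠ u (b + j) then 1 else 0 :=
    ((Equiv.addLeft b).tsum_eq fun j => if u (a + j) ≠ u j then (1 : ℝ≥0∞) else 0).symm
  rw [hshift, jumpCount, jumpCount, ← ENNReal.tsum_add]
  refine ENNReal.tsum_le_tsum fun j => ?_
  rw [add_assoc]
  split_ifs <;> simp_all

theorem jumpCount_neg (u : G → β) (a : G) : jumpCount u (-a) = jumpCount u a := by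
  rw [jumpCount, ← (Equiv.addLeft a).tsum_eq]
  simp [jumpCount, ne_comm]

variable (G) in
def jumpDominated (E : (G → β) → ℝ≥0∞) : AddSubgroup G where
  carrier := {e | ∃ C : ℝ≥0, ∀ u, jumpCount u e ≤ C * E u}
  zero_mem' := ⟨0, fun u => by simp [jumpCount_zero]⟩
  add_mem' := by
    rintro a b ⟨Ca, ha⟩ ⟨Cb, hb⟩
    refine ⟨Ca + Cb, fun u => ?_⟩
    calc jumpCount u (a + b) ≤ jumpCount u a + jumpCount u b := jumpCount_add_le u a b
      _ ≤ Ca * E u + Cb * E u := add_le_add (ha u) (hb u)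
      _ = (Ca + Cb : ℝ≥0) * E u := by push_cast; ring
  neg_mem' := by
    rintro a ⟨C, ha⟩
    exact ⟨C, fun u => (jumpCount_neg u a).trans_le (ha u)⟩

theorem tsum_prod_eq_tsum_tsum_add_right (f : G × G → ℝ≥0∞) :
    ∑' p, f p = ∑' k, ∑' j, f (k + j, j) := by
  let e : G × G ≃ G × G :=
    { toFun := fun q => (q.1 + q.2, q.2)
      invFun := fun p => (p.1 - p.2, p.2)
      left_inv := fun q => by simp
      right_inv := fun p => by simp }
  rw [← e.tsum_eq]
  exact ENNReal.tsum_prod (f := fun k j => f (k + j, j))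

theorem tsum_bonds_eq_sum_jumpCount [DecidableEq β] (u : G → β) (P : G → Prop) [DecidablePred P]
    (hP : {e | P e}.Finite) :
    ∑' p : G × G, (if P (p.1 - p.2) ∧ u p.1 ≠ u p.2 then (1 : ℝ≥0∞) else 0) =
      ∑ e ∈ hP.toFinset, jumpCount u e := by
  rw [tsum_prod_eq_tsum_tsum_add_right, sum_eq_tsum_indicator]
  refine tsum_congr fun k => ?_
  by_cases hk : P k
  · rw [Set.indicator_of_mem (by simpa using hk), jumpCount]
    simp only [hk, add_sub_cancel_right, true_and]
    congr!
  · simp [hk]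

end Jumps

section Ising

variable {G : Type*} [AddGroup G]

noncomputable def jumpEnergy (α : G → ℝ) (u : G → ℝ) : ℝ≥0∞ :=
  ∑' k, ENNReal.ofReal (α k) * jumpCount u k

theorem closure_pos_le_jumpDominated (α : G → ℝ) :
    AddSubgroup.closure {k | 0 < α k} ≤ jumpDominated G (jumpEnergy α) := by
  rw [AddSubgroup.closure_le]
  intro k hk
  refine ⟨(α k).toNNReal⁻¹, fun u => ?_⟩
  have hinv : ((α k).toNNReal⁻¹ : ℝ≥0∞) * ENNReal.ofReal (α k) = 1 :=
    ENNReal.inv_mul_cancel (by simpa using hk) ENNReal.ofReal_ne_top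
  calc jumpCount u k = (α k).toNNReal⁻¹ * (ENNReal.ofReal (α k) * jumpCount u k) := by
        rw [← mul_assoc, ENNReal.coe_inv (by simpa using hk), hinv, one_mul]
    _ ≤ (α k).toNNReal⁻¹ * jumpEnergy α u :=
        mul_le_mul_right (ENNReal.le_tsum (f := fun k => ENNReal.ofReal (α k) * jumpCount u k) k) _

theorem tsum_ofReal_mul_sq_sub_eq (α : G → ℝ) (u : G → ℝ) (hu : ∀ i, u i = 1 ∨ u i = -1) :
    ∑' p : G × G, ENNReal.ofReal (α (p.1 - p.2) * (u p.1 - u p.2) ^ 2) = 4 * jumpEnergy α u := by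
  have hsq : ∀ i j, (u i - u j) ^ 2 = 4 * if u i ≠ u j then 1 else 0 := by
    intro i j
    rcases hu i with h | h <;> rcases hu j with h' | h' <;> norm_num [h, h']
  rw [tsum_prod_eq_tsum_tsum_add_right, jumpEnergy, ← ENNReal.tsum_mul_left]
  refine tsum_congr fun k => ?_
  rw [jumpCount, ← ENNReal.tsum_mul_left, ← ENNReal.tsum_mul_left]
  refine tsum_congr fun j => ?_
  dsimp only
  rw [add_sub_cancel_right, hsq, ENNReal.ofReal_mul' (by positivity)]
  split_ifs <;> simp [mul_comm]

end Ising

theorem stmt_14_general (d : ℕ) (α : (Fin d → ℤ) → ℝ)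
    (hspan : AddSubgroup.closure {k : Fin d → ℤ | 0 < α k} = ⊤) :
    ∃ M : ℝ, 0 < M ∧ ∀ u : (Fin d → ℤ) → ℝ, (∀ i, u i = 1 ∨ u i = -1) →
      (∑' p : (Fin d → ℤ) × (Fin d → ℤ),
        (if (∃ n : Fin d, p.1 - p.2 = Pi.single n (1 : ℤ) ∨
              p.1 - p.2 = Pi.single n (-1 : ℤ)) ∧ u p.1 ≠ u p.2
          then (1 : ENNReal) else 0))
      ≤ ENNReal.ofReal M * ∑' p : (Fin d → ℤ) × (Fin d → ℤ),
          ENNReal.ofReal (α (p.1 - p.2) * (u p.1 - u p.2) ^ 2) := by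
  have hdom : ∀ e, e ∈ jumpDominated _ (jumpEnergy α) := fun e =>
    closure_pos_le_jumpDominated α (hspan ▸ AddSubgroup.mem_top e)
  choose C hC using hdom
  have hunit : {e : Fin d → ℤ | ∃ n, e = Pi.single n 1 ∨ e = Pi.single n (-1)}.Finite :=
    ((Set.finite_range fun n => Pi.single n 1).union
      (Set.finite_range fun n => Pi.single n (-1))).subset
      (by rintro e ⟨n, rfl | rfl⟩ <;> simp)
  refine ⟨∑ e ∈ hunit.toFinset, (C e : ℝ) + 1, by positivity, fun u hu => ?_⟩
  rw [tsum_ofReal_mul_sq_sub_eq α u hu]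
  calc _ = ∑ e ∈ hunit.toFinset, jumpCount u e := tsum_bonds_eq_sum_jumpCount u _ hunit
    _ ≤ ∑ e ∈ hunit.toFinset, (C e : ℝ≥0∞) * jumpEnergy α u :=
        Finset.sum_le_sum fun e _ => hC e u
    _ = ENNReal.ofReal (∑ e ∈ hunit.toFinset, (C e : ℝ)) * jumpEnergy α u := by
        rw [← Finset.sum_mul, ENNReal.ofReal_sum_of_nonneg fun e _ => (C e).coe_nonneg]
        simp
    _ ≤ ENNReal.ofReal (∑ e ∈ hunit.toFinset, (C e : ℝ) + 1) * (4 * jumpEnergy α u) := by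
        gcongr
        · linarith
        · exact le_mul_of_one_le_left zero_le (by norm_num)

/-- Coercivity of a connected finite-range Ising system: the number of
nearest-neighbour sign changes of a spin function is controlled by the Ising
energy (both counted as sums in `ℝ≥0∞`). -/
theorem stmt_14 (d : ℕ) (α : (Fin d → ℤ) → ℝ) (hα : ∀ k, 0 ≤ α k)
    (hsym : ∀ k, α (-k) = α k) (hfin : (Function.support α).Finite)
    (hspan : AddSubgroup.closure {k : Fin d → ℤ | 0 < α k} = ⊤) :
    ∃ M : ℝ, 0 < M ∧ ∀ u : (Fin d → ℤ) → ℝ, (∀ i, u i = 1 ∨ u i = -1) →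
      (∑' p : (Fin d → ℤ) × (Fin d → ℤ),
        (if (∃ n : Fin d, p.1 - p.2 = Pi.single n (1 : ℤ) ∨
              p.1 - p.2 = Pi.single n (-1 : ℤ)) ∧ u p.1 ≠ u p.2
          then (1 : ENNReal) else 0))
      ≤ ENNReal.ofReal M * ∑' p : (Fin d → ℤ) × (Fin d → ℤ),
          ENNReal.ofReal (α (p.1 - p.2) * (u p.1 - u p.2) ^ 2) :=
  stmt_14_general d α hspan
end
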